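/- arXiv:math/0002252 — 3 statements merged into one kernel-verified Lean document; each statement's English description precedes it below -/
import Mathlib

section
/- Let Σ₀, Σ₁, e be positive real numbers, n a positive real number, and let n₁, n₂ be integers with n₁ even, n₁ ≥ 2, and n₂ ≥ 3n₁. Then (Σ₀+Σ₁)·((9+3n₁−2n₂)·n²·Σ₀ + 4ne) < (2nΣ₀ + nΣ₁ + e)². -/
theorem stmt_2 (S₀ S₁ e n : ℝ) (hS₀ : 0 < S₀) (hS₁ : 0 < S₁) (he : 0 < e) (hn : 0 < n)
    (n₁ n₂ : ℤ) (hev : Even n₁) (hn₁ : 2 ≤ n₁) (hn₂ : 3 * n₁ ≤ n₂) :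
    (S₀ + S₁) * (((9 : ℝ) + 3 * n₁ - 2 * n₂) * n ^ 2 * S₀ + 4 * n * e)
      < (2 * n * S₀ + n * S₁ + e) ^ 2 := by
  have h2 : (3 : ℝ) * n₁ ≤ n₂ := by exact_mod_cast hn₂
  have h1 : (2 : ℝ) ≤ n₁ := by exact_mod_cast hn₁
  have hc : (9 : ℝ) + 3 * n₁ - 2 * n₂ ≤ 3 := by linarith
  nlinarith [sq_nonneg (n * S₁ - e), mul_pos hn hS₀, mul_pos hS₀ hS₁,
    mul_pos (mul_pos hn hn) (mul_pos hS₀ hS₁), sq_nonneg (n * S₀),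
    mul_pos (mul_pos hn hn) (mul_pos hS₀ hS₀),
    mul_nonneg (mul_nonneg hn.le he.le) (add_pos hS₀ hS₁).le,
    mul_le_mul_of_nonneg_right hc (mul_nonneg (mul_nonneg (sq_nonneg n) hS₀.le) (mul_pos (add_pos hS₀ hS₁) hS₀).le)]
end

section
/- Let Σ₀, Σ₁, Σ₀', b be positive real numbers, n a positive real number, m' ≥ 0 a real number, and let A, m_h, m_v be real numbers with m_h ≤ A. Suppose Σ₀'·m_v ≤ (2n² + 2m'n + 2n − A)·Σ₀ + 2nb and (Σ₀+Σ₁)·(Σ₀·m_h + Σ₀'·m_v) ≥ (2nΣ₀ + nΣ₁ + b)². Then n² − 2m'n − 2n < 0, i.e. m'/n > 1/2 − 1/n. -/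
theorem stmt_10 (S₀ S₁ S₀' b n m' A mh mv : ℝ)
    (hS₀ : 0 < S₀) (hS₁ : 0 < S₁) (hS₀' : 0 < S₀') (hb : 0 < b) (hn : 0 < n)
    (hm' : 0 ≤ m') (hmh : mh ≤ A)
    (h1 : S₀' * mv ≤ (2 * n ^ 2 + 2 * m' * n + 2 * n - A) * S₀ + 2 * n * b)
    (h2 : (S₀ + S₁) * (S₀ * mh + S₀' * mv) ≥ (2 * n * S₀ + n * S₁ + b) ^ 2) :
    n ^ 2 - 2 * m' * n - 2 * n < 0 ∧ m' / n > 1 / 2 - 1 / n := by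
  have hA : S₀ * mh ≤ S₀ * A := mul_le_mul_of_nonneg_left hmh hS₀.le
  have hsum : S₀ * mh + S₀' * mv ≤ (2 * n ^ 2 + 2 * m' * n + 2 * n) * S₀ + 2 * n * b := by
    nlinarith
  have hprod : (2 * n * S₀ + n * S₁ + b) ^ 2
      ≤ (S₀ + S₁) * ((2 * n ^ 2 + 2 * m' * n + 2 * n) * S₀ + 2 * n * b) := by
    have := mul_le_mul_of_nonneg_left hsum (by positivity : (0:ℝ) ≤ S₀ + S₁)
    linarith
  have key : n ^ 2 - 2 * m' * n - 2 * n < 0 := by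
    nlinarith [mul_pos hS₀ (add_pos hS₀ hS₁), sq_nonneg (n * S₀), sq_nonneg (n * S₁), mul_pos hS₀ hS₁,
      mul_pos hS₀ hb, sq_nonneg b, mul_pos hn hb, mul_pos (mul_pos hn hS₀) hb]
  refine ⟨key, ?_⟩
  rw [gt_iff_lt, lt_div_iff₀ hn]
  have hinv : (1 / n) * n = 1 := by field_simp
  nlinarith [key]
end

section
/- Let Σ₀, Σ₁, Σ₀', b be positive real numbers, n a positive real number, and let A ≥ 0, m', m_h, m_v be real numbers with m_h ≤ A. Suppose Σ₀'·m_v ≤ (4n² + 4m'n + 4n − 2A)·Σ₀ + 4nb, (Σ₀+Σ₁)·(Σ₀·m_h + Σ₀'·m_v) ≥ (2nΣ₀ + nΣ₁ + b)², and (nΣ₁ − b)² ≥ (1/2)·n²·Σ₀·(Σ₀+Σ₁). Then (1/2)·n² + A − 4m'n − 4n ≤ 0; in particular n ≤ 8m' + 8. -/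
theorem stmt_11 (S₀ S₁ S₀' b n A m' mh mv : ℝ)
    (hS₀ : 0 < S₀) (hS₁ : 0 < S₁) (hS₀' : 0 < S₀') (hb : 0 < b) (hn : 0 < n)
    (hA : 0 ≤ A) (hmh : mh ≤ A)
    (h1 : S₀' * mv ≤ (4 * n ^ 2 + 4 * m' * n + 4 * n - 2 * A) * S₀ + 4 * n * b)
    (h2 : (S₀ + S₁) * (S₀ * mh + S₀' * mv) ≥ (2 * n * S₀ + n * S₁ + b) ^ 2)
    (h3 : (n * S₁ - b) ^ 2 ≥ (1 / 2) * n ^ 2 * S₀ * (S₀ + S₁)) :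
    (1 / 2) * n ^ 2 + A - 4 * m' * n - 4 * n ≤ 0 ∧ n ≤ 8 * m' + 8 := by
  have hP : 0 < S₀ + S₁ := by linarith
  have key : (1/2) * n ^ 2 + A - 4 * m' * n - 4 * n ≤ 0 := by
    nlinarith [mul_pos hS₀ hP, mul_le_mul_of_nonneg_left h1 hP.le,
      mul_le_mul_of_nonneg_left hmh (mul_pos hS₀ hP).le, mul_pos hn hb, mul_pos hn hS₁]
  refine ⟨key, ?_⟩
  nlinarith [key, mul_pos hn hn]
end
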